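/- Let A be an m×n SSR(ε) matrix, let x ∈ ℝ^n be nonzero with Ax ≠ 0 and S^+(Ax) = S^-(x) = r for some 0 ≤ r ≤ min{m,n} − 1. Then the sign of the first nonzero component of Ax (or, if the first component is zero, the unique sign assigned to it in any maximizing completion determining S^+(Ax)) equals ε_r·ε_{r+1} times the sign of the first nonzero component of x (with the convention ε_0 := 1). -/

import Mathlib

/-!
Let `s` be the sign of the first nonzero entry of `x` and merge the columns of `A` over the
`r + 1` maximal runs of equally signed nonzero entries of `x`, with weights `|x j|`. Expanding
minors multilinearly, the merged `m × (r + 1)` matrix `C` is again `SSR(ε)`, and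
`A x = C a` with `a = s • (1, -1, 1, …)`. Choose rows `f 0 < ⋯ < f r` of `C`, one in each sign
run of the completion `w`, and let `σ` be the sign of `w 0`. By Cramer's rule, replacing the
first column of `C[f]` by `(A x)[f]` multiplies its determinant by `s`; expanding along that
column instead, every term has sign `σ ε r` because `A x` alternates in sign along `f`. Since
`C[f]` has determinant of sign `ε (r + 1)`, this forces `σ = ε r * ε (r + 1) * s`.
-/

open Matrix Filter

/-- Number of sign changes in a list of reals (consecutive pairs with negative product). -/
noncomputable def signChanges (l : List ℝ) : ℕ :=
  (l.zip l.tail).countP (fun p => decide (p.1 * p.2 < 0))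

/-- `S^-(v)`: sign changes of the coordinates of `v` after discarding zero entries. -/
noncomputable def Sm {n : ℕ} (v : Fin n → ℝ) : ℕ :=
  signChanges ((List.ofFn v).filter (fun x => decide (x ≠ 0)))

/-- `S^+(v)`: maximal number of sign changes over all ±1 completions of the zero
entries of `v`, with the convention `S^+(0) = n`. -/
noncomputable def Sp {n : ℕ} (v : Fin n → ℝ) : ℕ :=
  if v = 0 then n
  else Finset.univ.sup (fun σ : Fin n → Bool =>
    signChanges (List.ofFn (fun i => if v i = 0 then (if σ i then (1:ℝ) else -1) else v i)))

/-- First nonzero entry of a vector (`0` if the vector is zero). -/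
noncomputable def firstNz {n : ℕ} (v : Fin n → ℝ) : ℝ :=
  ((List.ofFn v).filter (fun x => decide (x ≠ 0))).headI

/-- `A` is strictly sign regular with sign pattern `ε`:
every `r × r` minor (`1 ≤ r ≤ min m n`) is nonzero with sign `ε r`. -/
def ssrPattern {m n : ℕ} (A : Matrix (Fin m) (Fin n) ℝ) (ε : ℕ → ℝ) : Prop :=
  ∀ r : ℕ, 1 ≤ r → r ≤ min m n → ∀ (f : Fin r → Fin m) (g : Fin r → Fin n),
    StrictMono f → StrictMono g → 0 < ε r * (A.submatrix f g).det

/-- `A` is sign regular with sign pattern `ε`: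
every nonzero `r × r` minor (`1 ≤ r ≤ min m n`) has sign `ε r`. -/
def srPattern {m n : ℕ} (A : Matrix (Fin m) (Fin n) ℝ) (ε : ℕ → ℝ) : Prop :=
  ∀ r : ℕ, 1 ≤ r → r ≤ min m n → ∀ (f : Fin r → Fin m) (g : Fin r → Fin n),
    StrictMono f → StrictMono g → 0 ≤ ε r * (A.submatrix f g).det

/-- The map `f` picks out consecutive indices. -/
def Contig {r m : ℕ} (f : Fin r → Fin m) : Prop :=
  ∃ a : ℕ, ∀ i : Fin r, (f i : ℕ) = a + (i : ℕ)

lemma signChanges_cons_cons (a b : ℝ) (l : List ℝ) :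
    signChanges (a :: b :: l) = signChanges (b :: l) + if a * b < 0 then 1 else 0 := by
  simp [signChanges, List.countP_cons]

lemma signChanges_le_cons (a : ℝ) (l : List ℝ) : signChanges l ≤ signChanges (a :: l) := by
  cases l with
  | nil => exact le_rfl
  | cons b l => rw [signChanges_cons_cons]; omega

lemma signChanges_cons_le (a : ℝ) (l : List ℝ) : signChanges (a :: l) ≤ signChanges l + 1 := by
  cases l with
  | nil => exact Nat.zero_le _
  | cons b l => rw [signChanges_cons_cons]; split <;> omega

lemma sign_mul_neg_one_pow_signChanges_cons_cons {a b : ℝ} (ha : a ≠ 0) (hb : b ≠ 0)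
    (l : List ℝ) :
    Real.sign a * (-1) ^ signChanges (a :: b :: l) = Real.sign b * (-1) ^ signChanges (b :: l) := by
  rw [signChanges_cons_cons, pow_add, mul_comm ((-1 : ℝ) ^ _), ← mul_assoc]
  congr 1
  rcases ha.lt_or_gt with ha | ha <;> rcases hb.lt_or_gt with hb | hb
  · simp [Real.sign_of_neg, ha, hb, (mul_pos_of_neg_of_neg ha hb).not_gt]
  · simp [Real.sign_of_neg, Real.sign_of_pos, ha, hb, mul_neg_of_neg_of_pos ha hb]
  · simp [Real.sign_of_neg, Real.sign_of_pos, ha, hb, mul_neg_of_pos_of_neg ha hb]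
  · simp [Real.sign_of_pos, ha, hb, (mul_pos ha hb).not_gt]

noncomputable def nonzeros (l : List ℝ) : List ℝ := l.filter (fun x => decide (x ≠ 0))

lemma nonzeros_cons_of_ne_zero {a : ℝ} (ha : a ≠ 0) (l : List ℝ) :
    nonzeros (a :: l) = a :: nonzeros l := by
  simp [nonzeros, ha]

@[simp] lemma nonzeros_cons_zero (l : List ℝ) : nonzeros (0 :: l) = nonzeros l := by
  simp [nonzeros]

lemma ne_zero_of_mem_nonzeros {a : ℝ} {l : List ℝ} (h : a ∈ nonzeros l) : a ≠ 0 := by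
  simpa using (List.mem_filter.mp h).2

lemma nonzeros_ne_nil {a : ℝ} {l : List ℝ} (ha : a ∈ l) (ha0 : a ≠ 0) : nonzeros l ≠ [] :=
  List.ne_nil_of_mem (List.mem_filter.mpr ⟨ha, by simpa using ha0⟩)

lemma antitone_signChanges_nonzeros_drop (l : List ℝ) :
    Antitone fun k => signChanges (nonzeros (l.drop k)) := by
  refine antitone_nat_of_succ_le fun k => ?_
  induction l generalizing k with
  | nil => simp
  | cons a l ih =>
    cases k with
    | zero =>
      by_cases ha : a = 0
      · simp [ha]
      · simpa [nonzeros_cons_of_ne_zero ha] using signChanges_le_cons a (nonzeros l)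
    | succ k => simpa using ih k

-- Both sides are the sign of the last nonzero entry of `l`.
lemma sign_headI_mul_neg_one_pow_nonzeros_cons (a : ℝ) {l : List ℝ} (hl : nonzeros l ≠ []) :
    Real.sign (nonzeros (a :: l)).headI * (-1) ^ signChanges (nonzeros (a :: l)) =
      Real.sign (nonzeros l).headI * (-1) ^ signChanges (nonzeros l) := by
  by_cases ha : a = 0
  · simp [ha]
  obtain ⟨b, t, hbt⟩ := List.exists_cons_of_ne_nil hl
  have hb : b ≠ 0 := ne_zero_of_mem_nonzeros (l := l) (by simp [hbt])
  rw [nonzeros_cons_of_ne_zero ha, hbt]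
  exact sign_mul_neg_one_pow_signChanges_cons_cons ha hb t

lemma sign_headI_mul_neg_one_pow_nonzeros_drop (l : List ℝ) (k : ℕ)
    (hk : nonzeros (l.drop k) ≠ []) :
    Real.sign (nonzeros l).headI * (-1) ^ signChanges (nonzeros l) =
      Real.sign (nonzeros (l.drop k)).headI * (-1) ^ signChanges (nonzeros (l.drop k)) := by
  induction l generalizing k with
  | nil => simp
  | cons a l ih =>
    cases k with
    | zero => simp
    | succ k =>
      rw [List.drop_succ_cons] at hk ⊢
      have hl : nonzeros l ≠ [] := fun h =>
        hk (List.eq_nil_of_sublist_nil (h ▸ ((l.drop_sublist k).filter _)))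
      rw [sign_headI_mul_neg_one_pow_nonzeros_cons a hl, ih k hk]

lemma exists_signChanges_nonzeros_drop_eq (l : List ℝ) {t : ℕ}
    (ht : t ≤ signChanges (nonzeros l)) (hl : nonzeros l ≠ []) :
    ∃ k, ∃ hk : k < l.length, l[k] ≠ 0 ∧ signChanges (nonzeros (l.drop k)) = t := by
  induction l with
  | nil => simp [nonzeros] at hl
  | cons a l ih =>
    by_cases ha : a = 0
    · subst ha
      simp only [nonzeros_cons_zero] at ht hl
      obtain ⟨k, hk, hk0, hkt⟩ := ih ht hl
      exact ⟨k + 1, by simpa using hk, by simpa using hk0, by simpa using hkt⟩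
    rw [nonzeros_cons_of_ne_zero ha] at ht
    rcases ht.eq_or_lt with rfl | ht
    · exact ⟨0, by simp, ha, by simp [nonzeros_cons_of_ne_zero ha]⟩
    have hl : nonzeros l ≠ [] := by rintro h; simp [h, signChanges] at ht
    obtain ⟨k, hk, hk0, hkt⟩ :=
      ih (Nat.le_of_lt_succ (ht.trans_le (signChanges_cons_le a _))) hl
    exact ⟨k + 1, by simpa using hk, by simpa using hk0, by simpa using hkt⟩

section SignBlock

variable {N : ℕ} (v : Fin N → ℝ)

/-- `signBlock v j = t` when the first nonzero entry of `v` at or after position `j` lies in the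
`t`-th maximal run of equally signed nonzero entries (counting from `0`). -/
noncomputable def signBlock (j : Fin N) : ℕ :=
  Sm v - signChanges (nonzeros ((List.ofFn v).drop j))

lemma signBlock_le (j : Fin N) : signBlock v j ≤ Sm v := Nat.sub_le _ _

lemma signBlock_monotone : Monotone (signBlock v) := fun _ _ hjk =>
  Nat.sub_le_sub_left (antitone_signChanges_nonzeros_drop _ (Fin.le_def.mp hjk)) _

lemma signBlock_eq_zero {i : Fin N} (hi : (i : ℕ) = 0) : signBlock v i = 0 := by
  simp [signBlock, hi, Sm, nonzeros]

lemma firstNz_ne_zero (hv : v ≠ 0) : firstNz v ≠ 0 := by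
  obtain ⟨j, hj⟩ := Function.ne_iff.mp hv
  obtain ⟨b, t, hbt⟩ :=
    List.exists_cons_of_ne_nil (nonzeros_ne_nil (List.mem_ofFn.mpr ⟨j, rfl⟩) hj)
  have hb : b ≠ 0 := ne_zero_of_mem_nonzeros (l := List.ofFn v) (by simp [hbt])
  change (nonzeros (List.ofFn v)).headI ≠ 0
  rwa [hbt]

lemma sign_apply_of_ne_zero {j : Fin N} (hj : v j ≠ 0) :
    Real.sign (v j) = Real.sign (firstNz v) * (-1) ^ signBlock v j := by
  have hdrop : nonzeros ((List.ofFn v).drop j) = v j :: nonzeros ((List.ofFn v).drop (j + 1)) := by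
    rw [List.drop_eq_getElem_cons (by simp), nonzeros_cons_of_ne_zero (by simpa using hj)]
    simp
  have key := sign_headI_mul_neg_one_pow_nonzeros_drop (List.ofFn v) j (by simp [hdrop])
  rw [hdrop, List.headI_cons, ← hdrop] at key
  have hsplit : Sm v = signBlock v j + signChanges (nonzeros ((List.ofFn v).drop j)) := by
    have := antitone_signChanges_nonzeros_drop (List.ofFn v) (Nat.zero_le j)
    simp only [List.drop_zero] at this
    exact (Nat.sub_add_cancel this).symm
  change Real.sign (firstNz v) * (-1) ^ Sm v = _ at key
  rw [hsplit, pow_add, ← mul_assoc] at key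
  exact (mul_right_cancel₀ (pow_ne_zero _ (by norm_num)) key).symm

lemma apply_eq_abs_mul (j : Fin N) :
    v j = |v j| * (Real.sign (firstNz v) * (-1) ^ signBlock v j) := by
  by_cases hj : v j = 0
  · simp [hj]
  rw [← sign_apply_of_ne_zero v hj]
  rcases Ne.lt_or_gt hj with h | h <;>
    simp [Real.sign_of_neg, Real.sign_of_pos, h, abs_of_neg, abs_of_pos]

lemma exists_signBlock_eq (hv : v ≠ 0) {t : ℕ} (ht : t ≤ Sm v) :
    ∃ j, v j ≠ 0 ∧ signBlock v j = t := by
  obtain ⟨j, hj⟩ := Function.ne_iff.mp hv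
  obtain ⟨k, hk, hk0, hkt⟩ := exists_signChanges_nonzeros_drop_eq (List.ofFn v)
    (t := Sm v - t) (Nat.sub_le _ _) (nonzeros_ne_nil (List.mem_ofFn.mpr ⟨j, rfl⟩) hj)
  refine ⟨⟨k, by simpa using hk⟩, by simpa using hk0, ?_⟩
  simp only [signBlock, hkt]
  omega

lemma exists_strictMono_signBlock_eq (hv : v ≠ 0) {r : ℕ} (hr : Sm v = r) :
    ∃ f : Fin (r + 1) → Fin N, StrictMono f ∧ ∀ t, signBlock v (f t) = t := by
  choose f hf using fun t : Fin (r + 1) =>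
    (exists_signBlock_eq v hv (t := t) (by omega)).imp fun _ => And.right
  refine ⟨f, fun t t' htt' => lt_of_not_ge fun hle => ?_, hf⟩
  have := signBlock_monotone v hle
  rw [hf, hf] at this
  exact (not_le.mpr htt') (Fin.le_def.mpr this)

end SignBlock

section BlockCompress

variable {m n p : ℕ} (A : Matrix (Fin m) (Fin n) ℝ) (β : Fin n → Fin p) (c : Fin n → ℝ)

def blockCompress : Matrix (Fin m) (Fin p) ℝ :=
  of fun i t => ∑ j with β j = t, A i j * c j

lemma mulVec_eq_blockCompress_mulVec {x : Fin n → ℝ} {a : Fin p → ℝ}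
    (hx : ∀ j, x j = c j * a (β j)) : A *ᵥ x = blockCompress A β c *ᵥ a := by
  ext i
  simp only [mulVec, dotProduct, blockCompress, of_apply, Finset.sum_mul]
  rw [← Finset.sum_fiberwise Finset.univ β]
  refine Finset.sum_congr rfl fun t _ => Finset.sum_congr rfl fun j hj => ?_
  rw [hx, (Finset.mem_filter.mp hj).2]
  ring

lemma det_blockCompress_submatrix {q : ℕ} (f : Fin q → Fin m) (τ : Fin q → Fin p) :
    ((blockCompress A β c).submatrix f τ).det =
      ∑ κ ∈ Fintype.piFinset fun t => {j | β j = τ t},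
        (∏ t, c (κ t)) * (A.submatrix f κ).det := by
  have hrows : ((blockCompress A β c).submatrix f τ)ᵀ =
      fun t => ∑ j with β j = τ t, fun k => A (f k) j * c j := by
    ext t k
    simp [blockCompress, Finset.sum_apply]
  rw [← det_transpose, hrows]
  change detRowAlternating.toMultilinearMap _ = _
  rw [MultilinearMap.map_sum_finset]
  refine Finset.sum_congr rfl fun κ _ => ?_
  rw [← det_transpose (A.submatrix f κ), ← det_mul_column]
  change det _ = _
  congr 1
  ext t k
  simp [mul_comm]

end BlockCompress

namespace ssrPattern

variable {m n : ℕ} {A : Matrix (Fin m) (Fin n) ℝ} {ε : ℕ → ℝ}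

lemma pos_det_submatrix (hA : ssrPattern A ε) (hε0 : ε 0 = 1) {q : ℕ} (hq : q ≤ min m n)
    {f : Fin q → Fin m} {g : Fin q → Fin n} (hf : StrictMono f) (hg : StrictMono g) :
    0 < ε q * (A.submatrix f g).det := by
  rcases Nat.eq_zero_or_pos q with rfl | hq1
  · simp [hε0]
  · exact hA q hq1 hq f g hf hg

lemma blockCompress (hA : ssrPattern A ε) {p : ℕ} {β : Fin n → Fin p} {c : Fin n → ℝ}
    (hβ : Monotone β) (hc : 0 ≤ c) (hblock : ∀ t, ∃ j, β j = t ∧ 0 < c j) :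
    ssrPattern (blockCompress A β c) ε := by
  choose g hβg hcg using hblock
  have hpn : p ≤ n := by
    simpa using Fintype.card_le_of_injective g fun t t' h => by rw [← hβg t, h, hβg t']
  intro q hq1 hq f τ hf hτ
  have hq' : q ≤ min m n := hq.trans (min_le_min_left m hpn)
  have hmono : ∀ κ ∈ Fintype.piFinset fun t => {j | β j = τ t}, StrictMono κ := by
    intro κ hκ t t' htt'
    simp only [Fintype.mem_piFinset, Finset.mem_filter, Finset.mem_univ, true_and] at hκ
    exact hβ.reflect_lt (by rw [hκ, hκ]; exact hτ htt')
  have hterm : ∀ κ ∈ Fintype.piFinset fun t => {j | β j = τ t},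
      ε q * ((∏ t, c (κ t)) * (A.submatrix f κ).det) =
        (∏ t, c (κ t)) * (ε q * (A.submatrix f κ).det) := fun _ _ => by ring
  rw [det_blockCompress_submatrix, Finset.mul_sum, Finset.sum_congr rfl hterm]
  refine Finset.sum_pos' (fun κ hκ => ?_) ⟨g ∘ τ, ?_, ?_⟩
  · exact mul_nonneg (Finset.prod_nonneg fun t _ => hc _) (hA q hq1 hq' f κ hf (hmono κ hκ)).le
  · simp [Fintype.mem_piFinset, hβg]
  · exact mul_pos (Finset.prod_pos fun t _ => hcg _)
      (hA q hq1 hq' f _ hf (hmono _ (by simp [Fintype.mem_piFinset, hβg])))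

lemma exists_mulVec_eq_mulVec_alternating (hA : ssrPattern A ε) {x : Fin n → ℝ} (hx : x ≠ 0)
    {r : ℕ} (hr : Sm x = r) :
    ∃ C : Matrix (Fin m) (Fin (r + 1)) ℝ, ssrPattern C ε ∧
      A *ᵥ x = C *ᵥ fun t => Real.sign (firstNz x) * (-1) ^ (t : ℕ) := by
  let β : Fin n → Fin (r + 1) := fun j => ⟨signBlock x j, by have := signBlock_le x j; omega⟩
  refine ⟨_root_.blockCompress A β fun j => |x j|, ?_,
    mulVec_eq_blockCompress_mulVec A β _ fun j => apply_eq_abs_mul x j⟩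
  exact hA.blockCompress (fun _ _ hjk => signBlock_monotone x hjk) (fun j => abs_nonneg _)
    fun t => (exists_signBlock_eq x hx (t := t) (by omega)).imp
      fun j hj => ⟨Fin.ext hj.2, abs_pos.mpr hj.1⟩

end ssrPattern

lemma det_updateCol_mulVec {ι R : Type*} [Fintype ι] [DecidableEq ι] [CommRing R]
    (B : Matrix ι ι R) (a : ι → R) (j : ι) : (B.updateCol j (B *ᵥ a)).det = a j * B.det := by
  rw [← cramer_apply, cramer_eq_adjugate_mulVec, mulVec_mulVec, adjugate_mul, smul_mulVec,
    one_mulVec, Pi.smul_apply, smul_eq_mul, mul_comm]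

lemma nonneg_mul_det_of_alternating {r : ℕ} (B : Matrix (Fin (r + 1)) (Fin (r + 1)) ℝ)
    (a : Fin (r + 1) → ℝ) {σ e : ℝ}
    (hminor : ∀ k : Fin (r + 1), 0 < e * (B.submatrix k.succAbove Fin.succ).det)
    (halternating : ∀ k : Fin (r + 1), 0 ≤ σ * (-1) ^ (k : ℕ) * (B *ᵥ a) k) :
    0 ≤ σ * e * (a 0 * B.det) := by
  rw [← det_updateCol_mulVec, det_succ_column_zero, Finset.mul_sum]
  refine Finset.sum_nonneg fun k _ => ?_
  have hminor_eq : (B.updateCol 0 (B *ᵥ a)).submatrix k.succAbove Fin.succ =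
      B.submatrix k.succAbove Fin.succ := by
    ext i l
    simp
  rw [updateCol_self, hminor_eq]
  calc (0 : ℝ)
      ≤ (σ * (-1) ^ (k : ℕ) * (B *ᵥ a) k) * (e * (B.submatrix k.succAbove Fin.succ).det) :=
        mul_nonneg (halternating k) (hminor k).le
    _ = _ := by ring

lemma eq_mul_mul_of_nonneg_of_pos {σ e e' s d : ℝ} (hσ : σ = 1 ∨ σ = -1) (he : e = 1 ∨ e = -1)
    (he' : e' = 1 ∨ e' = -1) (hs : s = 1 ∨ s = -1) (h : 0 ≤ σ * e * (s * d)) (h' : 0 < e' * d) :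
    σ = e * e' * s := by
  rcases hσ with rfl | rfl <;> rcases he with rfl | rfl <;> rcases he' with rfl | rfl <;>
    rcases hs with rfl | rfl <;> norm_num at h h' ⊢ <;> linarith

theorem stmt4_general {m n : ℕ} (A : Matrix (Fin m) (Fin n) ℝ) (ε : ℕ → ℝ)
    (hε0 : ε 0 = 1) (hsv : ∀ r, ε r = 1 ∨ ε r = -1) (hA : ssrPattern A ε)
    (x : Fin n → ℝ) (hx : x ≠ 0) (r : ℕ)
    (hr : r ≤ min m n - 1) (h1 : Sp (A *ᵥ x) = r) (h2 : Sm x = r) :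
    ∀ w : Fin m → ℝ, (∀ i, (A *ᵥ x) i ≠ 0 → w i = (A *ᵥ x) i) → (∀ i, w i ≠ 0) →
      Sm w = Sp (A *ᵥ x) →
      ∀ i0 : Fin m, (i0 : ℕ) = 0 →
        Real.sign (w i0) = ε r * ε (r + 1) * Real.sign (firstNz x) := by
  intro w hw hw0 hSw i0 hi0
  have hwne : w ≠ 0 := Function.ne_iff.mpr ⟨i0, hw0 i0⟩
  have hr1 : r + 1 ≤ min m n := by
    obtain ⟨j, -⟩ := Function.ne_iff.mp hx
    have := i0.pos
    have := j.pos
    omega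
  obtain ⟨C, hC, hAx⟩ := hA.exists_mulVec_eq_mulVec_alternating hx h2
  set σ := Real.sign (firstNz w)
  obtain ⟨f, hf, hft⟩ := exists_strictMono_signBlock_eq w hwne (hSw.trans h1)
  have halternating : ∀ k : Fin (r + 1), 0 ≤ σ * (-1) ^ (k : ℕ) * (A *ᵥ x) (f k) := by
    intro k
    by_cases hk : (A *ᵥ x) (f k) = 0
    · simp [hk]
    rw [← hw _ hk, apply_eq_abs_mul w, hft]
    calc 0 ≤ |w (f k)| * (σ * (-1) ^ (k : ℕ)) ^ 2 := by positivity
      _ = _ := by ring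
  have key := nonneg_mul_det_of_alternating (C.submatrix f id) _
    (fun k => hC.pos_det_submatrix hε0 (by omega) (hf.comp (Fin.strictMono_succAbove k))
      Fin.strictMono_succ) (by rw [hAx] at halternating; exact halternating)
  have hdet := hC.pos_det_submatrix hε0 (by omega) hf strictMono_id
  rw [sign_apply_of_ne_zero w (hw0 i0), signBlock_eq_zero w hi0, pow_zero, mul_one]
  exact eq_mul_mul_of_nonneg_of_pos
    (Real.sign_apply_eq_of_ne_zero _ (firstNz_ne_zero w hwne)).symm (hsv r) (hsv (r + 1))
    (Real.sign_apply_eq_of_ne_zero _ (firstNz_ne_zero x hx)).symm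
    (by simpa using key) hdet

theorem stmt4 {m n : ℕ} (A : Matrix (Fin m) (Fin n) ℝ) (ε : ℕ → ℝ)
    (hε0 : ε 0 = 1) (hsv : ∀ r, ε r = 1 ∨ ε r = -1) (hA : ssrPattern A ε)
    (x : Fin n → ℝ) (hx : x ≠ 0) (hAx : A *ᵥ x ≠ 0) (r : ℕ)
    (hr : r ≤ min m n - 1) (h1 : Sp (A *ᵥ x) = r) (h2 : Sm x = r) :
    ∀ w : Fin m → ℝ, (∀ i, (A *ᵥ x) i ≠ 0 → w i = (A *ᵥ x) i) → (∀ i, w i ≠ 0) →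
      Sm w = Sp (A *ᵥ x) →
      ∀ i0 : Fin m, (i0 : ℕ) = 0 →
        Real.sign (w i0) = ε r * ε (r + 1) * Real.sign (firstNz x) :=
  stmt4_general A ε hε0 hsv hA x hx r hr h1 h2
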